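/- In the unreliable protocol run with an arbitrary (deterministic) success function σ : ℕ → {true, false}, after the first receiver cycle the bounds satisfy: lb_n − 1 = max( {−1} ∪ { i ∈ [[0, r'−1]] | σ(tt(rev_k(i))) } ) and ub_n + 1 = min( {n} ∪ { i ∈ [[r''+1, n−1]] | σ(tt(rev_k(i))) } ), where tt(y) = min{ t ≥ 0 | (s+t) mod n = y }. -/
import Mathlib


/-- `revBit k x` is the `k`-bit reversal of `x`:
if `x = (x_{k-1}, …, x_0)₂` then `revBit k x = (x_0, …, x_{k-1})₂`. -/
def revBit (k x : ℕ) : ℕ := ∑ i ∈ Finset.range k, (x / 2 ^ i % 2) * 2 ^ (k - 1 - i)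

/-- State `(lb_t, ub_t)` of the receiver's protocol in the unreliable network,
with success function `σ : ℕ → Bool`: the receiver wakes up whenever
`lb_t ≤ x_t ≤ ub_t` (where `x_t = rev_k((s+t) mod 2^k)`), but the bounds are
updated only when the reception is successful, i.e. when `σ t` holds. -/
noncomputable def rboStateU (k s : ℕ) (key : ℤ → EReal) (a b : ℝ) (σ : ℕ → Bool) :
    ℕ → ℤ × ℤ
  | 0 => (0, 2 ^ k - 1)
  | t + 1 =>
    let p := rboStateU k s key a b σ t
    let x : ℤ := revBit k ((s + t) % 2 ^ k)
    if p.1 ≤ x ∧ x ≤ p.2 ∧ σ t = true then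
      if key x < (a : EReal) then (x + 1, p.2)
      else if (b : EReal) < key x then (p.1, x - 1)
      else p
    else p

/-- `lb_t` in the unreliable model. -/
noncomputable def lbU (k s : ℕ) (key : ℤ → EReal) (a b : ℝ) (σ : ℕ → Bool) (t : ℕ) : ℤ :=
  (rboStateU k s key a b σ t).1

/-- `ub_t` in the unreliable model. -/
noncomputable def ubU (k s : ℕ) (key : ℤ → EReal) (a b : ℝ) (σ : ℕ → Bool) (t : ℕ) : ℤ :=
  (rboStateU k s key a b σ t).2

/-- `r' = min { r ∈ [[-1, 2^k]] | a ≤ κ_r }`. -/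
noncomputable def rLo (k : ℕ) (key : ℤ → EReal) (a : ℝ) : ℤ :=
  sInf {r : ℤ | -1 ≤ r ∧ r ≤ 2 ^ k ∧ (a : EReal) ≤ key r}

/-- `r'' = max { r ∈ [[-1, 2^k]] | κ_r ≤ b }`. -/
noncomputable def rHi (k : ℕ) (key : ℤ → EReal) (b : ℝ) : ℤ :=
  sSup {r : ℤ | -1 ≤ r ∧ r ≤ 2 ^ k ∧ key r ≤ (b : EReal)}

/-- `usedU … t = 1` iff the receiver wakes up at receiver time `t`
(in the unreliable model), i.e. iff `lb_t ≤ x_t ≤ ub_t`. -/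
noncomputable def usedU (k s : ℕ) (key : ℤ → EReal) (a b : ℝ) (σ : ℕ → Bool) (t : ℕ) : ℕ :=
  if lbU k s key a b σ t ≤ (revBit k ((s + t) % 2 ^ k) : ℤ) ∧
     (revBit k ((s + t) % 2 ^ k) : ℤ) ≤ ubU k s key a b σ t then 1 else 0

/-- `missU … t = 1` iff the wake-up at receiver time `t` is a miss:
the receiver wakes up but `x_t ∉ [[r', r'']]`. -/
noncomputable def missU (k s : ℕ) (key : ℤ → EReal) (a b : ℝ) (σ : ℕ → Bool) (t : ℕ) : ℕ :=
  if lbU k s key a b σ t ≤ (revBit k ((s + t) % 2 ^ k) : ℤ) ∧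
     (revBit k ((s + t) % 2 ^ k) : ℤ) ≤ ubU k s key a b σ t ∧
     ¬(rLo k key a ≤ (revBit k ((s + t) % 2 ^ k) : ℤ) ∧
       (revBit k ((s + t) % 2 ^ k) : ℤ) ≤ rHi k key b) then 1 else 0

/-- `tt y = min { t ≥ 0 | (s + t) mod 2^k = y }`: the receiver time just before
the transmission of broadcaster time slot `y` in the first receiver cycle. -/
noncomputable def tt (k s y : ℕ) : ℕ := sInf {t : ℕ | (s + t) % 2 ^ k = y}

/- ===== auxiliary lemmas ===== -/

lemma revBit_succ (k x : ℕ) : revBit (k+1) x = x / 2^k % 2 + 2 * revBit k x := by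
  unfold revBit
  rw [Finset.sum_range_succ]
  have h1 : (k + 1 - 1 - k) = 0 := by omega
  rw [h1, pow_zero, mul_one, Finset.mul_sum, add_comm]
  congr 1
  apply Finset.sum_congr rfl
  intro i hi
  have hik := Finset.mem_range.mp hi
  have h2 : k + 1 - 1 - i = (k - 1 - i) + 1 := by omega
  rw [h2, pow_succ]
  ring

lemma revBit_succ' (k x : ℕ) : revBit (k+1) x = x % 2 * 2^k + revBit k (x / 2) := by
  unfold revBit
  rw [Finset.sum_range_succ', add_comm]
  congr 1
  · simp
  · apply Finset.sum_congr rfl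
    intro i hi
    have hik := Finset.mem_range.mp hi
    have h1 : x / 2 ^ (i+1) = x / 2 / 2 ^ i := by
      rw [Nat.div_div_eq_div_mul, ← pow_succ']
    have h2 : k + 1 - 1 - (i+1) = k - 1 - i := by omega
    rw [h1, h2]

lemma revBit_lt (k x : ℕ) : revBit k x < 2^k := by
  induction k generalizing x with
  | zero => simp [revBit]
  | succ k ih =>
    rw [revBit_succ]
    have h1 : x / 2^k % 2 < 2 := Nat.mod_lt _ (by norm_num)
    have h2 := ih x
    rw [pow_succ]
    omega

lemma revBit_mod (k x : ℕ) : revBit k (x % 2^k) = revBit k x := by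
  unfold revBit
  apply Finset.sum_congr rfl
  intro i hi
  have hik := Finset.mem_range.mp hi
  have h1 : (2:ℕ)^k = 2^i * 2^(k-i) := by rw [← pow_add]; congr 1; omega
  have h2 : x % 2^k / 2^i = x / 2^i % 2^(k-i) := by
    rw [h1, Nat.mod_mul_right_div_self]
  rw [h2]
  have h3 : (2:ℕ) ∣ 2^(k-i) := dvd_pow_self 2 (by omega)
  rw [Nat.mod_mod_of_dvd _ h3]

lemma revBit_revBit (k : ℕ) : ∀ x < 2^k, revBit k (revBit k x) = x := by
  induction k with
  | zero => intro x hx; interval_cases x; simp [revBit]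
  | succ k ih =>
    intro x hx
    rw [revBit_succ k x]
    set c := x / 2^k % 2 with hc
    set m := revBit k x with hm
    have hb : c < 2 := Nat.mod_lt _ (by norm_num)
    rw [revBit_succ']
    have hv1 : (c + 2 * m) % 2 = c := by omega
    have hv2 : (c + 2 * m) / 2 = m := by omega
    rw [hv1, hv2, hm, ← revBit_mod k x, ih _ (Nat.mod_lt _ (by positivity))]
    have hd : x / 2^k < 2 := by
      apply Nat.div_lt_of_lt_mul
      rw [pow_succ] at hx; omega
    have h5 : c = x / 2^k := by rw [hc, Nat.mod_eq_of_lt hd]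
    have h6 := Nat.div_add_mod x (2^k)
    have h7 : x % 2^k ≤ x := Nat.mod_le x _
    rw [h5, mul_comm]
    exact h6

lemma tt_eq (k s t : ℕ) (ht : t < 2^k) : tt k s ((s + t) % 2^k) = t := by
  have hmem : t ∈ {t' : ℕ | (s + t') % 2^k = (s+t) % 2^k} := rfl
  refine le_antisymm (Nat.sInf_le hmem) (le_csInf ⟨t, hmem⟩ ?_)
  intro t' ht'
  have h2 : t' ≡ t [MOD 2^k] := Nat.ModEq.add_left_cancel' s ht'
  calc t = t % 2^k := (Nat.mod_eq_of_lt ht).symm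
    _ = t' % 2^k := h2.symm
    _ ≤ t' := Nat.mod_le t' _

lemma tt_spec (k s y : ℕ) (hs : s < 2^k) (hy : y < 2^k) :
    (s + tt k s y) % 2^k = y ∧ tt k s y < 2^k := by
  have hpos : 0 < 2^k := by positivity
  set t0 := (y + 2^k - s) % 2^k with ht0
  have h0 : (s + t0) % 2^k = y := by
    have e1 : (s + t0) % 2^k = (s + (y + 2^k - s)) % 2^k :=
      (Nat.ModEq.add_left s (Nat.mod_modEq _ _))
    have e2 : s + (y + 2^k - s) = y + 2^k := by omega
    rw [e1, e2, Nat.add_mod_right, Nat.mod_eq_of_lt hy]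
  have hne : ({t : ℕ | (s + t) % 2 ^ k = y}).Nonempty := ⟨t0, h0⟩
  have hmem : tt k s y ∈ {t : ℕ | (s + t) % 2 ^ k = y} := Nat.sInf_mem hne
  refine ⟨hmem, ?_⟩
  calc tt k s y ≤ t0 := Nat.sInf_le h0
    _ < 2^k := Nat.mod_lt _ hpos

section KeyFacts
variable {k : ℕ} {key : ℤ → EReal} {a b : ℝ}

lemma keyMono (hsorted : ∀ i : ℤ, -1 ≤ i → i ≤ 2 ^ k - 1 → key i ≤ key (i + 1)) :
    ∀ i j : ℤ, -1 ≤ i → i ≤ j → j ≤ 2^k → key i ≤ key j := by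
  have H : ∀ m : ℕ, ∀ i : ℤ, -1 ≤ i → i + m ≤ 2^k → key i ≤ key (i + m) := by
    intro m
    induction m with
    | zero => intro i _ _; simp
    | succ m ih =>
      intro i hi hm
      have hc : ((m : ℤ) + 1 : ℤ) = ((m+1 : ℕ) : ℤ) := by push_cast; ring
      have hm' : i + (m:ℤ) ≤ 2^k - 1 := by rw [← hc] at hm; omega
      have h1 : key i ≤ key (i + m) := ih i hi (by omega)
      have h2 : key (i + m) ≤ key (i + m + 1) := hsorted _ (by omega) hm'
      have h3 : i + ((m+1 : ℕ) : ℤ) = i + m + 1 := by push_cast; ring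
      rw [h3]
      exact h1.trans h2
  intro i j hi hij hj
  obtain ⟨m, hm⟩ : ∃ m : ℕ, j = i + m := ⟨(j - i).toNat, by omega⟩
  subst hm; exact H m i hi hj

lemma rLo_facts (htop : key (2^k) = ⊤) (hbot : key (-1) = ⊥) :
    (-1 ≤ rLo k key a ∧ rLo k key a ≤ 2 ^ k ∧ (a : EReal) ≤ key (rLo k key a))
      ∧ 0 ≤ rLo k key a := by
  have hne : ({r : ℤ | -1 ≤ r ∧ r ≤ 2 ^ k ∧ (a : EReal) ≤ key r}).Nonempty :=
    ⟨2^k, by have : (0:ℤ) ≤ 2^k := (by positivity); omega, le_refl _, by rw [htop]; exact le_top⟩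
  have hbd : BddBelow {r : ℤ | -1 ≤ r ∧ r ≤ 2 ^ k ∧ (a : EReal) ≤ key r} :=
    ⟨-1, fun r hr => hr.1⟩
  have hmem := Int.csInf_mem hne hbd
  rw [show sInf {r : ℤ | -1 ≤ r ∧ r ≤ 2 ^ k ∧ (a : EReal) ≤ key r} = rLo k key a from rfl] at hmem
  refine ⟨hmem, ?_⟩
  rcases hmem with ⟨h1, h2, h3⟩
  rcases eq_or_lt_of_le h1 with h | h
  · exfalso
    rw [← h, hbot] at h3
    exact (EReal.coe_ne_bot a) (le_bot_iff.mp h3)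
  · omega

lemma key_lt_of_lt_rLo
    (x : ℤ) (hx1 : -1 ≤ x) (hx2 : x ≤ 2^k) (hx : x < rLo k key a) :
    key x < (a : EReal) := by
  by_contra h
  push_neg at h
  have h2 : rLo k key a ≤ x := csInf_le ⟨-1, fun r hr => hr.1⟩ ⟨hx1, hx2, h⟩
  omega

lemma le_key_of_rLo_le (htop : key (2^k) = ⊤) (hbot : key (-1) = ⊥)
    (hsorted : ∀ i : ℤ, -1 ≤ i → i ≤ 2 ^ k - 1 → key i ≤ key (i + 1))
    (x : ℤ) (hx2 : x ≤ 2^k) (hx : rLo k key a ≤ x) :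
    (a : EReal) ≤ key x := by
  obtain ⟨⟨h1, _, h3⟩, _⟩ := rLo_facts (a := a) htop hbot
  exact h3.trans (keyMono hsorted _ _ h1 hx hx2)

lemma rHi_facts (htop : key (2^k) = ⊤) (hbot : key (-1) = ⊥) :
    (-1 ≤ rHi k key b ∧ rHi k key b ≤ 2 ^ k ∧ key (rHi k key b) ≤ (b : EReal))
      ∧ rHi k key b ≤ 2 ^ k - 1 := by
  have hne : ({r : ℤ | -1 ≤ r ∧ r ≤ 2 ^ k ∧ key r ≤ (b : EReal)}).Nonempty :=
    ⟨-1, le_refl _, by have : (0:ℤ) ≤ 2^k := (by positivity); omega, by rw [hbot]; exact bot_le⟩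
  have hbd : BddAbove {r : ℤ | -1 ≤ r ∧ r ≤ 2 ^ k ∧ key r ≤ (b : EReal)} :=
    ⟨2^k, fun r hr => hr.2.1⟩
  have hmem := Int.csSup_mem hne hbd
  rw [show sSup {r : ℤ | -1 ≤ r ∧ r ≤ 2 ^ k ∧ key r ≤ (b : EReal)} = rHi k key b from rfl] at hmem
  refine ⟨hmem, ?_⟩
  rcases hmem with ⟨h1, h2, h3⟩
  rcases eq_or_lt_of_le h2 with h | h
  · exfalso
    rw [h, htop] at h3
    exact (EReal.coe_ne_top b) (top_le_iff.mp h3)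
  · omega

lemma lt_key_of_rHi_lt
    (x : ℤ) (hx1 : -1 ≤ x) (hx2 : x ≤ 2^k) (hx : rHi k key b < x) :
    (b : EReal) < key x := by
  by_contra h
  push_neg at h
  have h2 : x ≤ rHi k key b := le_csSup ⟨2^k, fun r hr => hr.2.1⟩ ⟨hx1, hx2, h⟩
  omega

lemma key_le_of_le_rHi (htop : key (2^k) = ⊤) (hbot : key (-1) = ⊥)
    (hsorted : ∀ i : ℤ, -1 ≤ i → i ≤ 2 ^ k - 1 → key i ≤ key (i + 1))
    (x : ℤ) (hx1 : -1 ≤ x) (hx : x ≤ rHi k key b) :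
    key x ≤ (b : EReal) := by
  obtain ⟨⟨_, h2, h3⟩, _⟩ := rHi_facts (b := b) htop hbot
  exact (keyMono hsorted _ _ hx1 hx h2).trans h3

lemma rLo_le_rHi_add_one (htop : key (2^k) = ⊤) (hbot : key (-1) = ⊥)
    (hab : a ≤ b) :
    rLo k key a ≤ rHi k key b + 1 := by
  obtain ⟨⟨h1, h2, h3⟩, h0⟩ := rLo_facts (a := a) htop hbot
  have hk : key (rLo k key a - 1) < (a : EReal) :=
    key_lt_of_lt_rLo (k := k) _ (by omega) (by omega) (by omega)
  have hk2 : key (rLo k key a - 1) ≤ (b : EReal) :=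
    le_of_lt (lt_of_lt_of_le hk (EReal.coe_le_coe_iff.mpr hab))
  have h4 : rLo k key a - 1 ≤ rHi k key b :=
    le_csSup ⟨2^k, fun r hr => hr.2.1⟩ ⟨by omega, by omega, hk2⟩
  omega

end KeyFacts

lemma rboStateU_succ (k s : ℕ) (key : ℤ → EReal) (a b : ℝ) (σ : ℕ → Bool) (t : ℕ) :
    rboStateU k s key a b σ (t+1) =
      if (rboStateU k s key a b σ t).1 ≤ (revBit k ((s + t) % 2 ^ k) : ℤ) ∧
         (revBit k ((s + t) % 2 ^ k) : ℤ) ≤ (rboStateU k s key a b σ t).2 ∧ σ t = true then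
        if key (revBit k ((s + t) % 2 ^ k) : ℤ) < (a : EReal) then
          ((revBit k ((s + t) % 2 ^ k) : ℤ) + 1, (rboStateU k s key a b σ t).2)
        else if (b : EReal) < key (revBit k ((s + t) % 2 ^ k) : ℤ) then
          ((rboStateU k s key a b σ t).1, (revBit k ((s + t) % 2 ^ k) : ℤ) - 1)
        else rboStateU k s key a b σ t
      else rboStateU k s key a b σ t := rfl


/-- In the unreliable protocol run with an arbitrary success function `σ`,
after the first receiver cycle (`n = 2^k` slots):
`lb_n - 1 = max({-1} ∪ { i ∈ [[0, r'-1]] | σ(tt(rev_k i)) })` and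
`ub_n + 1 = min({n} ∪ { i ∈ [[r''+1, n-1]] | σ(tt(rev_k i)) })`. -/
theorem stmt_12 (k s : ℕ) (hs : s < 2 ^ k)
    (key : ℤ → EReal) (a b : ℝ) (hab : a ≤ b)
    (hbot : key (-1) = ⊥) (htop : key (2 ^ k) = ⊤)
    (hsorted : ∀ i : ℤ, -1 ≤ i → i ≤ 2 ^ k - 1 → key i ≤ key (i + 1))
    (hfin : ∀ i : ℤ, 0 ≤ i → i ≤ 2 ^ k - 1 → ∃ x : ℝ, key i = (x : EReal))
    (σ : ℕ → Bool) :
    lbU k s key a b σ (2 ^ k) - 1 =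
      sSup ({-1} ∪ {i : ℤ | 0 ≤ i ∧ i ≤ rLo k key a - 1 ∧
        σ (tt k s (revBit k i.toNat)) = true}) ∧
    ubU k s key a b σ (2 ^ k) + 1 =
      sInf ({(2 ^ k : ℤ)} ∪ {i : ℤ | rHi k key b + 1 ≤ i ∧ i ≤ 2 ^ k - 1 ∧
        σ (tt k s (revBit k i.toNat)) = true}) := by
  have hposn : 0 < 2^k := by positivity
  have hcast : ((2^k : ℕ) : ℤ) = 2^k := by push_cast; ring
  obtain ⟨⟨hr1a, hr1b, hr1c⟩, hr1d⟩ := rLo_facts (a := a) htop hbot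
  obtain ⟨⟨hr2a, hr2b, hr2c⟩, hr2d⟩ := rHi_facts (b := b) htop hbot
  have hr12 : rLo k key a ≤ rHi k key b + 1 := rLo_le_rHi_add_one htop hbot hab
  have main : ∀ t, t ≤ 2^k →
      IsGreatest ({-1} ∪ {i : ℤ | 0 ≤ i ∧ i ≤ rLo k key a - 1 ∧
          tt k s (revBit k i.toNat) < t ∧ σ (tt k s (revBit k i.toNat)) = true})
        (lbU k s key a b σ t - 1) ∧
      IsLeast ({(2^k : ℤ)} ∪ {i : ℤ | rHi k key b + 1 ≤ i ∧ i ≤ 2^k - 1 ∧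
          tt k s (revBit k i.toNat) < t ∧ σ (tt k s (revBit k i.toNat)) = true})
        (ubU k s key a b σ t + 1) := by
    intro t
    induction t with
    | zero =>
      intro _
      have hlb0 : lbU k s key a b σ 0 = 0 := rfl
      have hub0 : ubU k s key a b σ 0 = 2^k - 1 := rfl
      constructor
      · constructor
        · simp only [Set.mem_union, Set.mem_singleton_iff, Set.mem_setOf_eq]
          left; omega
        · intro j hj
          simp only [Set.mem_union, Set.mem_singleton_iff, Set.mem_setOf_eq] at hj
          rcases hj with hj | hj
          · omega
          · exact absurd hj.2.2.1 (Nat.not_lt_zero _)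
      · constructor
        · simp only [Set.mem_union, Set.mem_singleton_iff, Set.mem_setOf_eq]
          left; omega
        · intro j hj
          simp only [Set.mem_union, Set.mem_singleton_iff, Set.mem_setOf_eq] at hj
          rcases hj with hj | hj
          · omega
          · exact absurd hj.2.2.1 (Nat.not_lt_zero _)
    | succ t ih =>
      intro ht
      obtain ⟨glo, ghi⟩ := ih (by omega)
      set x := revBit k ((s + t) % 2^k) with hxdef
      have hxlt : x < 2^k := revBit_lt _ _
      have hxz0 : (0:ℤ) ≤ (x:ℤ) := Int.natCast_nonneg _
      have hxzlt : (x:ℤ) < 2^k := by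
        rw [← hcast]; exact_mod_cast hxlt
      have httx : tt k s (revBit k x) = t := by
        rw [hxdef, revBit_revBit k _ (Nat.mod_lt _ hposn)]
        exact tt_eq k s t (by omega)
      have huniq : ∀ i : ℤ, 0 ≤ i → i < 2^k →
          (tt k s (revBit k i.toNat) = t ↔ i = (x:ℤ)) := by
        intro i hi0 hilt
        have hint : i.toNat < 2^k := by omega
        have hy : revBit k i.toNat < 2^k := revBit_lt _ _
        obtain ⟨hspec1, hspec2⟩ := tt_spec k s (revBit k i.toNat) hs hy
        constructor
        · intro h
          rw [h] at hspec1
          have h2 : x = i.toNat := by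
            rw [hxdef, hspec1]
            exact revBit_revBit k i.toNat hint
          omega
        · intro h
          have h3 : i.toNat = x := by omega
          rw [h3, httx]
      have httx2 : tt k s (revBit k ((x:ℤ)).toNat) = t := by
        rw [Int.toNat_natCast]; exact httx
      set OL : Set ℤ := {-1} ∪ {i : ℤ | 0 ≤ i ∧ i ≤ rLo k key a - 1 ∧
          tt k s (revBit k i.toNat) < t ∧ σ (tt k s (revBit k i.toNat)) = true} with hOL
      set NL : Set ℤ := {-1} ∪ {i : ℤ | 0 ≤ i ∧ i ≤ rLo k key a - 1 ∧
          tt k s (revBit k i.toNat) < t + 1 ∧ σ (tt k s (revBit k i.toNat)) = true} with hNL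
      set OH : Set ℤ := {(2^k : ℤ)} ∪ {i : ℤ | rHi k key b + 1 ≤ i ∧ i ≤ 2^k - 1 ∧
          tt k s (revBit k i.toNat) < t ∧ σ (tt k s (revBit k i.toNat)) = true} with hOH
      set NH : Set ℤ := {(2^k : ℤ)} ∪ {i : ℤ | rHi k key b + 1 ≤ i ∧ i ≤ 2^k - 1 ∧
          tt k s (revBit k i.toNat) < t + 1 ∧ σ (tt k s (revBit k i.toNat)) = true} with hNH
      have hmemlo : ∀ i : ℤ, i ∈ NL ↔
          (i ∈ OL ∨ (i = (x:ℤ) ∧ (x:ℤ) ≤ rLo k key a - 1 ∧ σ t = true)) := by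
        intro i
        rw [hNL, hOL]
        simp only [Set.mem_union, Set.mem_singleton_iff, Set.mem_setOf_eq]
        constructor
        · rintro (h | ⟨h0, h1, h2, h3⟩)
          · exact Or.inl (Or.inl h)
          · rcases Nat.lt_succ_iff_lt_or_eq.mp h2 with h2' | h2'
            · exact Or.inl (Or.inr ⟨h0, h1, h2', h3⟩)
            · have hix : i = (x:ℤ) := (huniq i h0 (by omega)).mp h2'
              rw [h2'] at h3
              exact Or.inr ⟨hix, by omega, h3⟩
        · rintro (h | ⟨hix, h1, h2⟩)
          · rcases h with h | ⟨h0, h1, h2, h3⟩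
            · exact Or.inl h
            · exact Or.inr ⟨h0, h1, by omega, h3⟩
          · subst hix
            right
            rw [httx2]
            exact ⟨hxz0, h1, by omega, h2⟩
      have hmemhi : ∀ i : ℤ, i ∈ NH ↔
          (i ∈ OH ∨ (i = (x:ℤ) ∧ rHi k key b + 1 ≤ (x:ℤ) ∧ σ t = true)) := by
        intro i
        rw [hNH, hOH]
        simp only [Set.mem_union, Set.mem_singleton_iff, Set.mem_setOf_eq]
        constructor
        · rintro (h | ⟨h0, h1, h2, h3⟩)
          · exact Or.inl (Or.inl h)
          · rcases Nat.lt_succ_iff_lt_or_eq.mp h2 with h2' | h2'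
            · exact Or.inl (Or.inr ⟨h0, h1, h2', h3⟩)
            · have hix : i = (x:ℤ) := (huniq i (by omega) (by omega)).mp h2'
              rw [h2'] at h3
              exact Or.inr ⟨hix, by omega, h3⟩
        · rintro (h | ⟨hix, h1, h2⟩)
          · rcases h with h | ⟨h0, h1, h2, h3⟩
            · exact Or.inl h
            · exact Or.inr ⟨h0, h1, by omega, h3⟩
          · subst hix
            right
            rw [httx2]
            exact ⟨h1, by omega, by omega, h2⟩
      have hLr1 : lbU k s key a b σ t ≤ rLo k key a := by
        have h := glo.1
        rw [hOL] at h
        simp only [Set.mem_union, Set.mem_singleton_iff, Set.mem_setOf_eq] at h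
        rcases h with h | ⟨h1, h2, _⟩
        · omega
        · omega
      have hUr2 : rHi k key b ≤ ubU k s key a b σ t := by
        have h := ghi.1
        rw [hOH] at h
        simp only [Set.mem_union, Set.mem_singleton_iff, Set.mem_setOf_eq] at h
        rcases h with h | ⟨h1, h2, _⟩
        · omega
        · omega
      have keep_lo : (((x:ℤ) ≤ rLo k key a - 1 ∧ σ t = true) →
            (x:ℤ) ≤ lbU k s key a b σ t - 1) →
          IsGreatest NL (lbU k s key a b σ t - 1) := by
        intro hxle
        constructor
        · exact (hmemlo _).mpr (Or.inl glo.1)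
        · intro j hj
          rcases (hmemlo j).mp hj with h | ⟨hj1, hj2, hj3⟩
          · exact glo.2 h
          · rw [hj1]; exact hxle ⟨hj2, hj3⟩
      have keep_hi : ((rHi k key b + 1 ≤ (x:ℤ) ∧ σ t = true) →
            ubU k s key a b σ t + 1 ≤ (x:ℤ)) →
          IsLeast NH (ubU k s key a b σ t + 1) := by
        intro hxle
        constructor
        · exact (hmemhi _).mpr (Or.inl ghi.1)
        · intro j hj
          rcases (hmemhi j).mp hj with h | ⟨hj1, hj2, hj3⟩
          · exact ghi.2 h
          · rw [hj1]; exact hxle ⟨hj2, hj3⟩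
      have upd_lo : (x:ℤ) ≤ rLo k key a - 1 → σ t = true →
          lbU k s key a b σ t ≤ (x:ℤ) → IsGreatest NL ((x:ℤ)) := by
        intro h1 h2 h3
        constructor
        · exact (hmemlo _).mpr (Or.inr ⟨rfl, h1, h2⟩)
        · intro j hj
          rcases (hmemlo j).mp hj with h | ⟨hj1, _, _⟩
          · have h4 := glo.2 h; omega
          · omega
      have upd_hi : rHi k key b + 1 ≤ (x:ℤ) → σ t = true →
          (x:ℤ) ≤ ubU k s key a b σ t → IsLeast NH ((x:ℤ)) := by
        intro h1 h2 h3
        constructor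
        · exact (hmemhi _).mpr (Or.inr ⟨rfl, h1, h2⟩)
        · intro j hj
          rcases (hmemhi j).mp hj with h | ⟨hj1, _, _⟩
          · have h4 := ghi.2 h; omega
          · omega
      by_cases hσ : σ t = true
      · rcases show (x:ℤ) ≤ rLo k key a - 1 ∨
            (rLo k key a ≤ (x:ℤ) ∧ (x:ℤ) ≤ rHi k key b) ∨
            rHi k key b + 1 ≤ (x:ℤ) by omega with hA | ⟨hB1, hB2⟩ | hC
        · have hka : key (x:ℤ) < (a:EReal) :=
            key_lt_of_lt_rLo (k := k) _ (by omega) (by omega) (by omega)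
          by_cases hL : lbU k s key a b σ t ≤ (x:ℤ)
          · have hxU : (x:ℤ) ≤ ubU k s key a b σ t := by omega
            have hupd : rboStateU k s key a b σ (t+1) =
                ((x:ℤ)+1, (rboStateU k s key a b σ t).2) := by
              rw [rboStateU_succ, if_pos ⟨hL, hxU, hσ⟩, if_pos hka]
            constructor
            · have he : lbU k s key a b σ (t+1) - 1 = (x:ℤ) := by
                show (rboStateU k s key a b σ (t+1)).1 - 1 = (x:ℤ)
                rw [hupd]; simp
              rw [he]; exact upd_lo hA hσ hL
            · have he : ubU k s key a b σ (t+1) = ubU k s key a b σ t := by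
                show (rboStateU k s key a b σ (t+1)).2 = _
                rw [hupd]; rfl
              rw [he]; exact keep_hi (fun h => by omega)
          · have hupd : rboStateU k s key a b σ (t+1) = rboStateU k s key a b σ t := by
              rw [rboStateU_succ, if_neg (fun h => hL h.1)]
            constructor
            · have he : lbU k s key a b σ (t+1) = lbU k s key a b σ t := by
                show (rboStateU k s key a b σ (t+1)).1 = _
                rw [hupd]; rfl
              rw [he]; exact keep_lo (fun _ => by omega)
            · have he : ubU k s key a b σ (t+1) = ubU k s key a b σ t := by
                show (rboStateU k s key a b σ (t+1)).2 = _
                rw [hupd]; rfl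
              rw [he]; exact keep_hi (fun h => by omega)
        · have hka : ¬ key (x:ℤ) < (a:EReal) :=
            not_lt.mpr (le_key_of_rLo_le htop hbot hsorted _ (by omega) hB1)
          have hkb : ¬ (b:EReal) < key (x:ℤ) :=
            not_lt.mpr (key_le_of_le_rHi htop hbot hsorted _ (by omega) hB2)
          have hupd : rboStateU k s key a b σ (t+1) = rboStateU k s key a b σ t := by
            by_cases h1 : (rboStateU k s key a b σ t).1 ≤ ((x:ℕ):ℤ) ∧
                ((x:ℕ):ℤ) ≤ (rboStateU k s key a b σ t).2 ∧ σ t = true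
            · rw [rboStateU_succ, if_pos h1, if_neg hka, if_neg hkb]
            · rw [rboStateU_succ, if_neg h1]
          constructor
          · have he : lbU k s key a b σ (t+1) = lbU k s key a b σ t := by
              show (rboStateU k s key a b σ (t+1)).1 = _
              rw [hupd]; rfl
            rw [he]; exact keep_lo (fun h => by omega)
          · have he : ubU k s key a b σ (t+1) = ubU k s key a b σ t := by
              show (rboStateU k s key a b σ (t+1)).2 = _
              rw [hupd]; rfl
            rw [he]; exact keep_hi (fun h => by omega)
        · have hkb : (b:EReal) < key (x:ℤ) :=
            lt_key_of_rHi_lt (k := k) _ (by omega) (by omega) (by omega)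
          have hka : ¬ key (x:ℤ) < (a:EReal) :=
            not_lt.mpr (le_of_lt (lt_of_le_of_lt (EReal.coe_le_coe_iff.mpr hab) hkb))
          by_cases hU : (x:ℤ) ≤ ubU k s key a b σ t
          · have hLx : lbU k s key a b σ t ≤ (x:ℤ) := by omega
            have hupd : rboStateU k s key a b σ (t+1) =
                ((rboStateU k s key a b σ t).1, (x:ℤ)-1) := by
              rw [rboStateU_succ, if_pos ⟨hLx, hU, hσ⟩, if_neg hka, if_pos hkb]
            constructor
            · have he : lbU k s key a b σ (t+1) = lbU k s key a b σ t := by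
                show (rboStateU k s key a b σ (t+1)).1 = _
                rw [hupd]; rfl
              rw [he]; exact keep_lo (fun h => by omega)
            · have he : ubU k s key a b σ (t+1) + 1 = (x:ℤ) := by
                show (rboStateU k s key a b σ (t+1)).2 + 1 = (x:ℤ)
                rw [hupd]; simp
              rw [he]; exact upd_hi hC hσ hU
          · have hupd : rboStateU k s key a b σ (t+1) = rboStateU k s key a b σ t := by
              rw [rboStateU_succ, if_neg (fun h => hU h.2.1)]
            constructor
            · have he : lbU k s key a b σ (t+1) = lbU k s key a b σ t := by
                show (rboStateU k s key a b σ (t+1)).1 = _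
                rw [hupd]; rfl
              rw [he]; exact keep_lo (fun h => by omega)
            · have he : ubU k s key a b σ (t+1) = ubU k s key a b σ t := by
                show (rboStateU k s key a b σ (t+1)).2 = _
                rw [hupd]; rfl
              rw [he]; exact keep_hi (fun h => by omega)
      · have hupd : rboStateU k s key a b σ (t+1) = rboStateU k s key a b σ t := by
          rw [rboStateU_succ, if_neg (fun h => hσ h.2.2)]
        constructor
        · have he : lbU k s key a b σ (t+1) = lbU k s key a b σ t := by
            show (rboStateU k s key a b σ (t+1)).1 = _
            rw [hupd]; rfl
          rw [he]; exact keep_lo (fun h => absurd h.2 hσ)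
        · have he : ubU k s key a b σ (t+1) = ubU k s key a b σ t := by
            show (rboStateU k s key a b σ (t+1)).2 = _
            rw [hupd]; rfl
          rw [he]; exact keep_hi (fun h => absurd h.2 hσ)
  obtain ⟨glo, ghi⟩ := main (2^k) le_rfl
  constructor
  · have hseteq : ({-1} ∪ {i : ℤ | 0 ≤ i ∧ i ≤ rLo k key a - 1 ∧
        σ (tt k s (revBit k i.toNat)) = true} : Set ℤ)
        = {-1} ∪ {i : ℤ | 0 ≤ i ∧ i ≤ rLo k key a - 1 ∧
          tt k s (revBit k i.toNat) < 2^k ∧ σ (tt k s (revBit k i.toNat)) = true} := by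
      ext i
      simp only [Set.mem_union, Set.mem_singleton_iff, Set.mem_setOf_eq]
      constructor
      · rintro (h | ⟨h0, h1, h2⟩)
        · exact Or.inl h
        · exact Or.inr ⟨h0, h1, (tt_spec k s _ hs (revBit_lt _ _)).2, h2⟩
      · rintro (h | ⟨h0, h1, _, h3⟩)
        · exact Or.inl h
        · exact Or.inr ⟨h0, h1, h3⟩
    rw [hseteq]
    exact (IsGreatest.csSup_eq glo).symm
  · have hseteq : ({(2^k : ℤ)} ∪ {i : ℤ | rHi k key b + 1 ≤ i ∧ i ≤ 2^k - 1 ∧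
        σ (tt k s (revBit k i.toNat)) = true} : Set ℤ)
        = {(2^k : ℤ)} ∪ {i : ℤ | rHi k key b + 1 ≤ i ∧ i ≤ 2^k - 1 ∧
          tt k s (revBit k i.toNat) < 2^k ∧ σ (tt k s (revBit k i.toNat)) = true} := by
      ext i
      simp only [Set.mem_union, Set.mem_singleton_iff, Set.mem_setOf_eq]
      constructor
      · rintro (h | ⟨h0, h1, h2⟩)
        · exact Or.inl h
        · exact Or.inr ⟨h0, h1, (tt_spec k s _ hs (revBit_lt _ _)).2, h2⟩
      · rintro (h | ⟨h0, h1, _, h3⟩)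
        · exact Or.inl h
        · exact Or.inr ⟨h0, h1, h3⟩
    rw [hseteq]
    exact (IsLeast.csInf_eq ghi).symm
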